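/- The 4×4 matrix U_⊛(α,β) defined by the entries a_± = (cos((α−β)/2) ± cos((α+β)/2)) / (2|cos((α⊛β)/2)|) and b_± = (sin((α+β)/2) ± sin((α−β)/2)) / (2|sin((α⊛β)/2)|) is unitary for all α, β ∈ (0, π). -/

import Mathlib

/-!
`U_⊛(α, β)` acts as the rotation `[[a₊, a₋], [-a₋, a₊]]` on coordinates `0, 3` and as the
reflection `[[b₋, b₊], [b₊, -b₋]]` on coordinates `1, 2`, so it is orthogonal as soon as
`a₊² + a₋² = 1 = b₊² + b₋²`. With `c := cos α cos β = cos (α ⊛ β)`, the half-angle formulas give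
`4 cos² ((α ⊛ β) / 2) = 2 (1 + c)` and `4 sin² ((α ⊛ β) / 2) = 2 (1 - c)`, and the squared
numerators of `a₊, a₋` (resp. `b₊, b₋`) also sum to `2 (1 + c)` (resp. `2 (1 - c)`).
For `α ∈ (0, π)` we have `|c| < 1`, so neither denominator vanishes.
-/

open Real Matrix

/-- The equality-node angle `α ⊛ β := arccos (cos α * cos β)`. -/
noncomputable def ostar (α β : ℝ) : ℝ := Real.arccos (Real.cos α * Real.cos β)

/-- `a₊` and `a₋` (via sign `s = ±1`). -/
noncomputable def aCoef (s : ℝ) (α β : ℝ) : ℝ :=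
  (Real.cos ((α - β) / 2) + s * Real.cos ((α + β) / 2)) / (2 * |Real.cos (ostar α β / 2)|)

/-- `b₊` and `b₋` (via sign `s = ±1`). -/
noncomputable def bCoef (s : ℝ) (α β : ℝ) : ℝ :=
  (Real.sin ((α + β) / 2) + s * Real.sin ((α - β) / 2)) / (2 * |Real.sin (ostar α β / 2)|)

/-- The 4×4 equality-node matrix `U_⊛(α, β)`. -/
noncomputable def Ustar (α β : ℝ) : Matrix (Fin 4) (Fin 4) ℝ :=
  !![aCoef 1 α β, 0, 0, aCoef (-1) α β;
     -aCoef (-1) α β, 0, 0, aCoef 1 α β;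
     0, bCoef (-1) α β, bCoef 1 α β, 0;
     0, bCoef 1 α β, -bCoef (-1) α β, 0]

theorem abs_cos_mul_cos_lt_one {α : ℝ} (hα : α ∈ Set.Ioo 0 π) (β : ℝ) :
    |cos α * cos β| < 1 := by
  have hcos : |cos α| < 1 := by
    have hsin : 0 < sin α := sin_pos_of_pos_of_lt_pi hα.1 hα.2
    rw [← sq_lt_one_iff_abs_lt_one, ← sin_sq_add_cos_sq α]
    linarith [pow_pos hsin 2]
  rw [abs_mul]
  exact mul_lt_one_of_nonneg_of_lt_one_left (abs_nonneg _) hcos (abs_cos_le_one β)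

theorem cos_ostar (α β : ℝ) : cos (ostar α β) = cos α * cos β := by
  have h : |cos α * cos β| ≤ 1 := by
    rw [abs_mul]; exact mul_le_one₀ (abs_cos_le_one α) (abs_nonneg _) (abs_cos_le_one β)
  exact cos_arccos (neg_le_of_abs_le h) (le_of_abs_le h)

theorem cos_sq_half_ostar (α β : ℝ) : cos (ostar α β / 2) ^ 2 = (1 + cos α * cos β) / 2 := by
  rw [cos_sq, mul_div_cancel₀ _ two_ne_zero, cos_ostar]; ring

theorem sin_sq_half_ostar (α β : ℝ) : sin (ostar α β / 2) ^ 2 = (1 - cos α * cos β) / 2 := by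
  rw [sin_sq_eq_half_sub, mul_div_cancel₀ _ two_ne_zero, cos_ostar]; ring

theorem cos_sq_half_sub_add_cos_sq_half_add (α β : ℝ) :
    cos ((α - β) / 2) ^ 2 + cos ((α + β) / 2) ^ 2 = 1 + cos α * cos β := by
  rw [cos_sq, cos_sq, mul_div_cancel₀ _ two_ne_zero, mul_div_cancel₀ _ two_ne_zero,
    cos_sub, cos_add]
  ring

theorem sin_sq_half_add_add_sin_sq_half_sub (α β : ℝ) :
    sin ((α + β) / 2) ^ 2 + sin ((α - β) / 2) ^ 2 = 1 - cos α * cos β := by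
  rw [sin_sq_eq_half_sub, sin_sq_eq_half_sub, mul_div_cancel₀ _ two_ne_zero,
    mul_div_cancel₀ _ two_ne_zero, cos_sub, cos_add]
  ring

/-- The signs are written `1 * y` and `-1 * y` so that the lemma applies verbatim to `aCoef` and
`bCoef`, whose sign argument `s` enters as `s * y`. -/
theorem add_div_sq_add_sub_div_sq {x y d : ℝ} (hd : d ≠ 0) (h : d ^ 2 = 2 * (x ^ 2 + y ^ 2)) :
    ((x + 1 * y) / d) ^ 2 + ((x + -1 * y) / d) ^ 2 = 1 := by
  field_simp
  linear_combination -h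

theorem aCoef_sq_add_aCoef_sq {α β : ℝ} (h : cos α * cos β ≠ -1) :
    aCoef 1 α β ^ 2 + aCoef (-1) α β ^ 2 = 1 := by
  have hd : (2 * |cos (ostar α β / 2)|) ^ 2 = 2 * (1 + cos α * cos β) := by
    rw [mul_pow, sq_abs, cos_sq_half_ostar]; ring
  refine add_div_sq_add_sub_div_sq ?_ (by rw [hd, cos_sq_half_sub_add_cos_sq_half_add])
  rw [← pow_ne_zero_iff two_ne_zero, hd]
  contrapose! h
  linarith

theorem bCoef_sq_add_bCoef_sq {α β : ℝ} (h : cos α * cos β ≠ 1) :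
    bCoef 1 α β ^ 2 + bCoef (-1) α β ^ 2 = 1 := by
  have hd : (2 * |sin (ostar α β / 2)|) ^ 2 = 2 * (1 - cos α * cos β) := by
    rw [mul_pow, sq_abs, sin_sq_half_ostar]; ring
  refine add_div_sq_add_sub_div_sq ?_ (by rw [hd, sin_sq_half_add_add_sin_sq_half_sub])
  rw [← pow_ne_zero_iff two_ne_zero, hd]
  contrapose! h
  linarith

theorem rotation_reflection_mul_transpose {p q r s : ℝ} (hpq : p ^ 2 + q ^ 2 = 1)
    (hrs : r ^ 2 + s ^ 2 = 1) :
    let M : Matrix (Fin 4) (Fin 4) ℝ := !![p, 0, 0, q; -q, 0, 0, p; 0, s, r, 0; 0, r, -s, 0]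
    M * Mᵀ = 1 := by
  ext i j
  fin_cases i <;> fin_cases j <;> simp [mul_apply, Fin.sum_univ_four, one_apply] <;>
    linarith

theorem Ustar_unitary_general (α β : ℝ) (hα : α ∈ Set.Ioo 0 π) :
    Ustar α β * (Ustar α β)ᵀ = 1 ∧ (Ustar α β)ᵀ * Ustar α β = 1 := by
  obtain ⟨hlower, hupper⟩ := abs_lt.1 (abs_cos_mul_cos_lt_one hα β)
  have hU : Ustar α β * (Ustar α β)ᵀ = 1 :=
    rotation_reflection_mul_transpose (aCoef_sq_add_aCoef_sq hlower.ne')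
      (bCoef_sq_add_bCoef_sq hupper.ne)
  exact ⟨hU, mul_eq_one_comm.1 hU⟩

/-- `U_⊛(α, β)` is unitary (real orthogonal) for all `α, β ∈ (0, π)`. -/
theorem Ustar_unitary (α β : ℝ) (hα : α ∈ Set.Ioo 0 π) (hβ : β ∈ Set.Ioo 0 π) :
    Ustar α β * (Ustar α β)ᵀ = 1 ∧ (Ustar α β)ᵀ * Ustar α β = 1 :=
  Ustar_unitary_general α β hα
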